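/- arXiv:1210.4076 — 5 statements merged into one kernel-verified Lean document; each statement's English description precedes it below -/
import Mathlib

section
/- Let (λ_n)_{n≥1} be a sequence of complex numbers with ∑_{n=1}^∞ |λ_n|² < ∞ and let z ∈ ℂ. Then the infinite products ∏_{n=1}^∞ (1 − zλ_n)·exp(zλ_n), ∏_{n=1}^∞ (1 + zλ_n)·exp(−zλ_n) and ∏_{n=1}^∞ (1 − z²λ_n²) are all multipliable, and ∏_{n=1}^∞ (1 − z²λ_n²) = (∏_{n=1}^∞ (1 − zλ_n)·exp(zλ_n)) · (∏_{n=1}^∞ (1 + zλ_n)·exp(−zλ_n)). -/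
/-!
Each factor differs from `1` by `O(|w|²)`: for the Weierstrass factors
`(1 ∓ w) e^{±w}` the linear terms cancel, and `1 - w²` is exact. So all three products converge
absolutely when `∑ |zλₙ|² < ∞`, and the identity follows factorwise from
`(1 - w) e^{w} · (1 + w) e^{-w} = 1 - w²`.
-/

namespace Complex

lemma norm_one_sub_mul_exp_sub_one_le {w : ℂ} (hw : ‖w‖ ≤ 1) :
    ‖(1 - w) * exp w - 1‖ ≤ 3 * ‖w‖ ^ 2 := by
  have h₁ : ‖exp w - 1 - w‖ ≤ ‖w‖ ^ 2 := norm_exp_sub_one_sub_id_le hw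
  have h₂ : ‖exp w - 1‖ ≤ 2 * ‖w‖ := norm_exp_sub_one_le hw
  calc ‖(1 - w) * exp w - 1‖ = ‖(exp w - 1 - w) - w * (exp w - 1)‖ := by ring_nf
    _ ≤ ‖exp w - 1 - w‖ + ‖w‖ * ‖exp w - 1‖ := (norm_sub_le _ _).trans_eq (by rw [norm_mul])
    _ ≤ ‖w‖ ^ 2 + ‖w‖ * (2 * ‖w‖) := by gcongr
    _ = 3 * ‖w‖ ^ 2 := by ring

variable {ι : Type*} {w : ι → ℂ}

lemma summable_one_sub_mul_exp_sub_one (hw : Summable fun i => ‖w i‖ ^ 2) :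
    Summable fun i => (1 - w i) * exp (w i) - 1 := by
  have hsmall : ∀ᶠ i in Filter.cofinite, ‖w i‖ ≤ 1 := by
    filter_upwards [hw.tendsto_cofinite_zero.eventually_le_const one_pos] with i hi
    exact (sq_le_one_iff₀ (norm_nonneg _)).mp hi
  refine (hw.mul_left 3).of_norm_bounded_eventually ?_
  filter_upwards [hsmall] with i hi using norm_one_sub_mul_exp_sub_one_le hi

lemma multipliable_one_sub_mul_exp (hw : Summable fun i => ‖w i‖ ^ 2) :
    Multipliable fun i => (1 - w i) * exp (w i) := by
  simpa using Complex.multipliable_one_add_of_summable (summable_one_sub_mul_exp_sub_one hw)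

lemma multipliable_one_add_mul_exp_neg (hw : Summable fun i => ‖w i‖ ^ 2) :
    Multipliable fun i => (1 + w i) * exp (-w i) := by
  simpa using multipliable_one_sub_mul_exp (w := fun i => -w i) (by simpa using hw)

lemma multipliable_one_sub_sq (hw : Summable fun i => ‖w i‖ ^ 2) :
    Multipliable fun i => 1 - w i ^ 2 := by
  have hsq : Summable fun i => -w i ^ 2 := Summable.of_norm (by simpa using hw)
  simpa [sub_eq_add_neg] using Complex.multipliable_one_add_of_summable hsq

lemma one_sub_mul_exp_mul_one_add_mul_exp_neg (w : ℂ) :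
    (1 - w) * exp w * ((1 + w) * exp (-w)) = 1 - w ^ 2 := by
  have hexp : exp w * exp (-w) = 1 := by rw [← exp_add, add_neg_cancel, exp_zero]
  linear_combination (1 - w) * (1 + w) * hexp

lemma tprod_one_sub_sq_eq_mul (hw : Summable fun i => ‖w i‖ ^ 2) :
    ∏' i, (1 - w i ^ 2) = (∏' i, (1 - w i) * exp (w i)) * ∏' i, (1 + w i) * exp (-w i) := by
  rw [← (multipliable_one_sub_mul_exp hw).tprod_mul (multipliable_one_add_mul_exp_neg hw)]
  exact tprod_congr fun i => (one_sub_mul_exp_mul_one_add_mul_exp_neg (w i)).symm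

end Complex

open Complex

/-- For a square-summable sequence `(λ n)` of complex numbers (the eigenvalues of a
Hilbert–Schmidt operator) and any `z ∈ ℂ`, the products defining
`det₂(I - zK)`, `det₂(I + zK)` and `det₁(I - z²K²)` are multipliable and
`det₁(I - z²K²) = det₂(I - zK) · det₂(I + zK)`. -/
theorem stmt_0 (lam : ℕ → ℂ) (hlam : Summable fun n => ‖lam n‖ ^ 2) (z : ℂ) :
    Multipliable (fun n => (1 - z * lam n) * Complex.exp (z * lam n)) ∧
    Multipliable (fun n => (1 + z * lam n) * Complex.exp (-(z * lam n))) ∧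
    Multipliable (fun n => 1 - z ^ 2 * lam n ^ 2) ∧
    (∏' n, (1 - z ^ 2 * lam n ^ 2)) =
      (∏' n, (1 - z * lam n) * Complex.exp (z * lam n)) *
        (∏' n, (1 + z * lam n) * Complex.exp (-(z * lam n))) := by
  have hw : Summable fun n => ‖z * lam n‖ ^ 2 := by
    simpa only [norm_mul, mul_pow] using hlam.mul_left (‖z‖ ^ 2)
  simp only [← mul_pow]
  exact ⟨multipliable_one_sub_mul_exp hw, multipliable_one_add_mul_exp_neg hw,
    multipliable_one_sub_sq hw, tprod_one_sub_sq_eq_mul hw⟩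
end

section
/- Let (λ_n)_{n≥1} be a sequence of complex numbers with ∑_{n=1}^∞ |λ_n|⁴ < ∞ and let z ∈ ℂ. Then the infinite products ∏_{n=1}^∞ (1 − zλ_n)·exp(zλ_n + z²λ_n²/2 + z³λ_n³/3), ∏_{n=1}^∞ (1 + zλ_n)·exp(−zλ_n + z²λ_n²/2 − z³λ_n³/3) and ∏_{n=1}^∞ (1 − z²λ_n²)·exp(z²λ_n²) are all multipliable, and ∏_{n=1}^∞ (1 − z²λ_n²)·exp(z²λ_n²) = (∏_{n=1}^∞ (1 − zλ_n)·exp(zλ_n + z²λ_n²/2 + z³λ_n³/3)) · (∏_{n=1}^∞ (1 + zλ_n)·exp(−zλ_n + z²λ_n²/2 − z³λ_n³/3)). -/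
/-!
Each factor is a Weierstrass elementary factor `E_p(w) = (1 - w) exp (∑_{k ≤ p} w^k / k)`, which
equals `exp (log (1 - w) + ∑_{k ≤ p} w^k / k)` and hence differs from `1` by `O(|w|^(p+1))`
near `0`; so `∑ |λ_n|⁴ < ∞` makes the products with `p = 3` and `p = 1` (at `z²λ_n²`) converge.
The identity holds factorwise: the odd terms of the exponents cancel in `E_3(w) E_3(-w) = E_1(w²)`.
-/

open Complex

/-- The `k = 0` summand is `1 / 0 = 0`, matching the convention of `Complex.logTaylor`. -/
noncomputable def weierstrassFactor (p : ℕ) (w : ℂ) : ℂ :=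
  (1 - w) * exp (∑ k ∈ Finset.range (p + 1), w ^ k / k)

lemma weierstrassFactor_one (w : ℂ) : weierstrassFactor 1 w = (1 - w) * exp w := by
  simp [weierstrassFactor, Finset.sum_range_succ]

lemma weierstrassFactor_three (w : ℂ) :
    weierstrassFactor 3 w = (1 - w) * exp (w + w ^ 2 / 2 + w ^ 3 / 3) := by
  simp [weierstrassFactor, Finset.sum_range_succ]

lemma Complex.logTaylor_neg (n : ℕ) (w : ℂ) :
    logTaylor n (-w) = -∑ k ∈ Finset.range n, w ^ k / k := by
  rw [logTaylor, ← Finset.sum_neg_distrib]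
  refine Finset.sum_congr rfl fun k _ => ?_
  rw [neg_pow w, ← mul_assoc, ← pow_add, show k + 1 + k = 2 * k + 1 by ring, pow_succ, pow_mul]
  ring

lemma weierstrassFactor_eq_exp {p : ℕ} {w : ℂ} (hw : ‖w‖ < 1) :
    weierstrassFactor p w = exp (log (1 + -w) - logTaylor (p + 1) (-w)) := by
  have hw' : 1 - w ≠ 0 := by
    intro h
    rw [← eq_of_sub_eq_zero h] at hw
    simp at hw
  rw [exp_sub, logTaylor_neg, ← sub_eq_add_neg, exp_log hw', exp_neg, div_inv_eq_mul,
    weierstrassFactor]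

lemma norm_weierstrassFactor_sub_one_le {p : ℕ} {w : ℂ} (hw : ‖w‖ ≤ 1 / 2) :
    ‖weierstrassFactor p w - 1‖ ≤ 4 * ‖w‖ ^ (p + 1) := by
  have hw₁ : ‖w‖ < 1 := by linarith
  set u := log (1 + -w) - logTaylor (p + 1) (-w)
  have hu : ‖u‖ ≤ 2 * ‖w‖ ^ (p + 1) := by
    have hinv : (1 - ‖w‖)⁻¹ ≤ 2 := by
      rw [inv_le_comm₀ (by linarith) two_pos]; linarith
    calc ‖u‖ ≤ ‖w‖ ^ (p + 1) * (1 - ‖w‖)⁻¹ / (p + 1) := by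
          simpa only [norm_neg] using norm_log_sub_logTaylor_le p (z := -w) (by rwa [norm_neg])
      _ ≤ ‖w‖ ^ (p + 1) * 2 / 1 := by
          gcongr
          linarith [p.cast_nonneg (α := ℝ)]
      _ = 2 * ‖w‖ ^ (p + 1) := by ring
  have hu₁ : ‖u‖ ≤ 1 := by
    have : ‖w‖ ^ (p + 1) ≤ (1 / 2) ^ 1 :=
      (pow_le_pow_left₀ (norm_nonneg w) hw _).trans
        (pow_le_pow_of_le_one (by norm_num) (by norm_num) (by omega))
    linarith
  calc ‖weierstrassFactor p w - 1‖ = ‖exp u - 1‖ := by rw [weierstrassFactor_eq_exp hw₁]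
    _ ≤ 2 * ‖u‖ := norm_exp_sub_one_le hu₁
    _ ≤ 4 * ‖w‖ ^ (p + 1) := by linarith

lemma multipliable_weierstrassFactor {ι : Type*} (p : ℕ) {f : ι → ℂ}
    (hf : Summable fun i => ‖f i‖ ^ (p + 1)) :
    Multipliable fun i => weierstrassFactor p (f i) := by
  have hsmall : ∀ᶠ i in Filter.cofinite, ‖f i‖ ≤ 1 / 2 := by
    filter_upwards [hf.tendsto_cofinite_zero.eventually_le_const
      (show (0 : ℝ) < (1 / 2) ^ (p + 1) by positivity)] with i hi
    exact le_of_pow_le_pow_left₀ p.succ_ne_zero (by norm_num) hi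
  have hsum : Summable fun i => weierstrassFactor p (f i) - 1 :=
    (hf.mul_left 4).of_norm_bounded_eventually <| by
      filter_upwards [hsmall] with i hi using norm_weierstrassFactor_sub_one_le hi
  simpa using Complex.multipliable_one_add_of_summable hsum

lemma weierstrassFactor_mul_weierstrassFactor_neg (m : ℕ) (w : ℂ) :
    weierstrassFactor (2 * m + 1) w * weierstrassFactor (2 * m + 1) (-w) =
      weierstrassFactor m (w ^ 2) := by
  have hsum : ∀ m : ℕ, ∑ k ∈ Finset.range (2 * m + 2), (w ^ k / k + (-w) ^ k / k) =
      ∑ k ∈ Finset.range (m + 1), (w ^ 2) ^ k / k := by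
    intro m
    induction m with
    | zero => simp [Finset.sum_range_succ]
    | succ m ih =>
      rw [show 2 * (m + 1) + 2 = 2 * m + 2 + 1 + 1 by ring, Finset.sum_range_succ,
        Finset.sum_range_succ, ih, Finset.sum_range_succ _ (m + 1),
        Even.neg_pow ⟨m + 1, by ring⟩, Odd.neg_pow ⟨m + 1, by ring⟩, ← pow_mul]
      push_cast
      field_simp
      ring
  simp only [weierstrassFactor, mul_mul_mul_comm, ← exp_add, ← Finset.sum_add_distrib, hsum]
  congr 1
  ring

/-- For a sequence `(λ n)` with `∑ ‖λ n‖⁴ < ∞` (eigenvalues of an operator in 𝒥₄)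
and `z ∈ ℂ`, the products defining `det₄(I - zK)`, `det₄(I + zK)` and
`det₂(I - z²K²)` are multipliable and
`det₂(I - z²K²) = det₄(I - zK) · det₄(I + zK)`. -/
theorem stmt_3 (lam : ℕ → ℂ) (hlam : Summable fun n => ‖lam n‖ ^ 4) (z : ℂ) :
    Multipliable (fun n => (1 - z * lam n) *
      Complex.exp (z * lam n + z ^ 2 * lam n ^ 2 / 2 + z ^ 3 * lam n ^ 3 / 3)) ∧
    Multipliable (fun n => (1 + z * lam n) *
      Complex.exp (-(z * lam n) + z ^ 2 * lam n ^ 2 / 2 - z ^ 3 * lam n ^ 3 / 3)) ∧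
    Multipliable (fun n =>
      (1 - z ^ 2 * lam n ^ 2) * Complex.exp (z ^ 2 * lam n ^ 2)) ∧
    (∏' n, (1 - z ^ 2 * lam n ^ 2) * Complex.exp (z ^ 2 * lam n ^ 2)) =
      (∏' n, (1 - z * lam n) *
        Complex.exp (z * lam n + z ^ 2 * lam n ^ 2 / 2 + z ^ 3 * lam n ^ 3 / 3)) *
        (∏' n, (1 + z * lam n) *
          Complex.exp (-(z * lam n) + z ^ 2 * lam n ^ 2 / 2 - z ^ 3 * lam n ^ 3 / 3)) := by
  have hfac : ∀ n, (1 - z * lam n) * exp (z * lam n + z ^ 2 * lam n ^ 2 / 2 +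
      z ^ 3 * lam n ^ 3 / 3) = weierstrassFactor 3 (z * lam n) :=
    fun n => by rw [weierstrassFactor_three]; ring_nf
  have hfac_neg : ∀ n, (1 + z * lam n) * exp (-(z * lam n) + z ^ 2 * lam n ^ 2 / 2 -
      z ^ 3 * lam n ^ 3 / 3) = weierstrassFactor 3 (-(z * lam n)) :=
    fun n => by rw [weierstrassFactor_three]; ring_nf
  have hfac_sq : ∀ n, (1 - z ^ 2 * lam n ^ 2) * exp (z ^ 2 * lam n ^ 2) =
      weierstrassFactor 1 ((z * lam n) ^ 2) :=
    fun n => by rw [weierstrassFactor_one]; ring_nf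
  simp only [hfac, hfac_neg, hfac_sq]
  have hsum : Summable fun n => ‖z * lam n‖ ^ 4 := by
    simpa only [norm_mul, mul_pow] using hlam.mul_left (‖z‖ ^ 4)
  have hmul := multipliable_weierstrassFactor 3 hsum
  have hmul_neg := multipliable_weierstrassFactor 3 (f := fun n => -(z * lam n))
    (by simpa only [norm_neg] using hsum)
  have hmul_sq := multipliable_weierstrassFactor 1 (f := fun n => (z * lam n) ^ 2)
    (by simpa only [norm_pow, ← pow_mul] using hsum)
  have hprod : ∀ n, weierstrassFactor 1 ((z * lam n) ^ 2) =
      weierstrassFactor 3 (z * lam n) * weierstrassFactor 3 (-(z * lam n)) :=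
    fun n => (weierstrassFactor_mul_weierstrassFactor_neg 1 (z * lam n)).symm
  exact ⟨hmul, hmul_neg, hmul_sq, by rw [tprod_congr hprod, hmul.tprod_mul hmul_neg]⟩
end

section
/- Let a < b be real numbers and let k : [a,b] × [a,b] → ℂ be such that: for every x ∈ [a,b] the function k_x := k(x,·) is integrable on [a,b]; sup_{x∈[a,b]} ‖k_x‖_{L¹} < ∞; and ‖k_{x₁} − k_{x₂}‖_{L¹} → 0 as x₁ → x₂ for all x₁, x₂ ∈ [a,b]. Then for every measurable function u : [a,b] → ℂ with |u(y)| ≤ 1 for almost every y, the function Ku(x) = ∫_a^b k(x,y)·u(y) dy satisfies: (i) |Ku(x)| ≤ sup_{x∈[a,b]} ‖k_x‖_{L¹} for all x ∈ [a,b]; (ii) |Ku(x₁) − Ku(x₂)| ≤ ‖k_{x₁} − k_{x₂}‖_{L¹} for all x₁, x₂ ∈ [a,b]; and (iii) Ku is continuous on [a,b]. -/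
open MeasureTheory Filter Topology

section MulBoundedByOne

variable {α 𝕜 : Type*} [MeasurableSpace α] {μ : Measure α} [RCLike 𝕜] {g : α → 𝕜}

theorem norm_integral_mul_le_integral_norm {f : α → 𝕜} (hf : Integrable f μ)
    (hg1 : ∀ᵐ y ∂μ, ‖g y‖ ≤ 1) :
    ‖∫ y, f y * g y ∂μ‖ ≤ ∫ y, ‖f y‖ ∂μ :=
  calc ‖∫ y, f y * g y ∂μ‖ ≤ ∫ y, ‖f y * g y‖ ∂μ := norm_integral_le_integral_norm _
    _ ≤ ∫ y, ‖f y‖ ∂μ := by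
      refine integral_mono_of_nonneg (ae_of_all _ fun _ => norm_nonneg _) hf.norm ?_
      filter_upwards [hg1] with y hy
      rw [norm_mul]
      exact mul_le_of_le_one_right (norm_nonneg _) hy

theorem norm_integral_mul_sub_integral_mul_le {f₁ f₂ : α → 𝕜} (hf₁ : Integrable f₁ μ)
    (hf₂ : Integrable f₂ μ) (hg : AEStronglyMeasurable g μ) (hg1 : ∀ᵐ y ∂μ, ‖g y‖ ≤ 1) :
    ‖(∫ y, f₁ y * g y ∂μ) - ∫ y, f₂ y * g y ∂μ‖ ≤ ∫ y, ‖f₁ y - f₂ y‖ ∂μ := by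
  rw [← integral_sub (hf₁.mul_bdd hg hg1) (hf₂.mul_bdd hg hg1)]
  simpa only [Pi.sub_apply, sub_mul] using norm_integral_mul_le_integral_norm (hf₁.sub hf₂) hg1

end MulBoundedByOne

theorem continuousWithinAt_of_norm_sub_le {X E : Type*} [TopologicalSpace X]
    [SeminormedAddCommGroup E] {F : X → E} {d : X → ℝ} {s : Set X} {x₀ : X}
    (hF : ∀ x ∈ s, ‖F x - F x₀‖ ≤ d x) (hd : Tendsto d (𝓝[s] x₀) (𝓝 0)) :
    ContinuousWithinAt F s x₀ := by
  rw [ContinuousWithinAt, tendsto_iff_norm_sub_tendsto_zero]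
  exact squeeze_zero' (Eventually.of_forall fun _ => norm_nonneg _)
    (eventually_mem_nhdsWithin.mono hF) hd

theorem stmt_9_general (a b : ℝ) (k : ℝ → ℝ → ℂ)
    (hint : ∀ x ∈ Set.Icc a b, IntegrableOn (k x) (Set.Icc a b))
    (hbdd : BddAbove (Set.range fun x : Set.Icc a b => ∫ y in Set.Icc a b, ‖k x y‖))
    (hcont : ∀ x₂ ∈ Set.Icc a b,
      Filter.Tendsto (fun x₁ => ∫ y in Set.Icc a b, ‖k x₁ y - k x₂ y‖)
        (nhdsWithin x₂ (Set.Icc a b)) (nhds 0))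
    (u : ℝ → ℂ) (hu : Measurable u)
    (hu1 : ∀ᵐ y ∂(volume.restrict (Set.Icc a b)), ‖u y‖ ≤ 1) :
    (∀ x ∈ Set.Icc a b, ‖∫ y in Set.Icc a b, k x y * u y‖ ≤
      ⨆ x : Set.Icc a b, ∫ y in Set.Icc a b, ‖k x y‖) ∧
    (∀ x₁ ∈ Set.Icc a b, ∀ x₂ ∈ Set.Icc a b,
      ‖(∫ y in Set.Icc a b, k x₁ y * u y) - ∫ y in Set.Icc a b, k x₂ y * u y‖ ≤
        ∫ y in Set.Icc a b, ‖k x₁ y - k x₂ y‖) ∧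
    ContinuousOn (fun x => ∫ y in Set.Icc a b, k x y * u y) (Set.Icc a b) := by
  have hlip : ∀ x₁ ∈ Set.Icc a b, ∀ x₂ ∈ Set.Icc a b,
      ‖(∫ y in Set.Icc a b, k x₁ y * u y) - ∫ y in Set.Icc a b, k x₂ y * u y‖ ≤
        ∫ y in Set.Icc a b, ‖k x₁ y - k x₂ y‖ := fun x₁ hx₁ x₂ hx₂ =>
    norm_integral_mul_sub_integral_mul_le (hint x₁ hx₁) (hint x₂ hx₂)
      hu.aestronglyMeasurable hu1
  refine ⟨fun x hx => ?_, hlip, fun x₂ hx₂ => ?_⟩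
  · exact (norm_integral_mul_le_integral_norm (hint x hx) hu1).trans
      (le_ciSup hbdd ⟨x, hx⟩)
  · exact continuousWithinAt_of_norm_sub_le (fun x₁ hx₁ => hlip x₁ hx₁ x₂ hx₂) (hcont x₂ hx₂)

/-- Let `k` be a kernel on `[a,b]²` such that every slice `k x = k(x,·)` is
integrable, the `L¹` norms of the slices are uniformly bounded, and
`x ↦ k x` is continuous from `[a,b]` into `L¹[a,b]` (Hypothesis 1 of the paper).
Then for any measurable `u` with `‖u‖ ≤ 1` a.e. on `[a,b]`, the function
`Ku(x) = ∫_a^b k(x,y)u(y) dy` is bounded by `sup_x ‖k_x‖_{L¹}`, satisfies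
`|Ku(x₁) - Ku(x₂)| ≤ ‖k_{x₁} - k_{x₂}‖_{L¹}`, and is continuous on `[a,b]`. -/
theorem stmt_9 (a b : ℝ) (hab : a < b) (k : ℝ → ℝ → ℂ)
    (hint : ∀ x ∈ Set.Icc a b, IntegrableOn (k x) (Set.Icc a b))
    (hbdd : BddAbove (Set.range fun x : Set.Icc a b => ∫ y in Set.Icc a b, ‖k x y‖))
    (hcont : ∀ x₂ ∈ Set.Icc a b,
      Filter.Tendsto (fun x₁ => ∫ y in Set.Icc a b, ‖k x₁ y - k x₂ y‖)
        (nhdsWithin x₂ (Set.Icc a b)) (nhds 0))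
    (u : ℝ → ℂ) (hu : Measurable u)
    (hu1 : ∀ᵐ y ∂(volume.restrict (Set.Icc a b)), ‖u y‖ ≤ 1) :
    (∀ x ∈ Set.Icc a b, ‖∫ y in Set.Icc a b, k x y * u y‖ ≤
      ⨆ x : Set.Icc a b, ∫ y in Set.Icc a b, ‖k x y‖) ∧
    (∀ x₁ ∈ Set.Icc a b, ∀ x₂ ∈ Set.Icc a b,
      ‖(∫ y in Set.Icc a b, k x₁ y * u y) - ∫ y in Set.Icc a b, k x₂ y * u y‖ ≤
        ∫ y in Set.Icc a b, ‖k x₁ y - k x₂ y‖) ∧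
    ContinuousOn (fun x => ∫ y in Set.Icc a b, k x y * u y) (Set.Icc a b) :=
  stmt_9_general a b k hint hbdd hcont u hu hu1
end

section
/- Let a < b be real numbers and let k : [a,b] × [a,b] → ℂ be such that: for every x ∈ [a,b] the function k_x := k(x,·) is integrable on [a,b]; sup_{x∈[a,b]} ‖k_x‖_{L¹} < ∞; and ‖k_{x₁} − k_{x₂}‖_{L¹} → 0 as x₁ → x₂ for all x₁, x₂ ∈ [a,b]. Then the linear map K on C([a,b], ℂ) defined by (Ku)(x) = ∫_a^b k(x,y)·u(y) dy is a well-defined bounded linear operator from C([a,b], ℂ) (with the supremum norm) to itself, and K is a compact operator (the image of the closed unit ball of C([a,b], ℂ) is relatively compact). -/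
open MeasureTheory Filter Topology

attribute [local instance] MeasureTheory.Measure.Subtype.measureSpace

/-!
For `‖u‖ ≤ 1` the function `K u` is bounded by `sup_x ‖k_x‖_{L¹}` and satisfies
`|K u x - K u x₀| ≤ ‖k_x - k_{x₀}‖_{L¹}`, a modulus of continuity at `x₀` that does not depend
on `u`. So the image of the unit ball is uniformly bounded and equicontinuous, and Arzelà–Ascoli
gives compactness of its closure.
-/

theorem ContinuousMap.isCompact_closure_of_equicontinuous {X β : Type*} [TopologicalSpace X]
    [CompactSpace X] [MetricSpace β] {s : Set β} (hs : IsCompact s) {A : Set C(X, β)}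
    (hA : ∀ f ∈ A, ∀ x, f x ∈ s) (H : Equicontinuous fun f : A => ⇑(f : C(X, β))) :
    IsCompact (closure A) := by
  let e := ContinuousMap.isometryEquivBoundedOfCompact X β
  have hcompact : IsCompact (closure (e '' A)) := by
    refine BoundedContinuousFunction.arzela_ascoli s hs _ ?_ ?_
    · rintro _ x ⟨f, hf, rfl⟩
      exact hA f hf x
    · refine H.comp fun g : e '' A => ⟨e.symm g, ?_⟩
      obtain ⟨f, hf, hfg⟩ := g.2
      rwa [← hfg, e.symm_apply_apply]
  rwa [← e.toHomeomorph.isCompact_image, e.toHomeomorph.image_closure]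

section IntegralOperator

variable {X Y 𝕜 : Type*} [RCLike 𝕜] [TopologicalSpace Y] [CompactSpace Y]
  [MeasurableSpace Y] {μ : Measure Y}

theorem norm_integral_mul_continuousMap_le {g : Y → 𝕜} (hg : Integrable g μ) (u : C(Y, 𝕜)) :
    ‖∫ y, g y * u y ∂μ‖ ≤ (∫ y, ‖g y‖ ∂μ) * ‖u‖ :=
  calc ‖∫ y, g y * u y ∂μ‖ ≤ ∫ y, ‖g y‖ * ‖u‖ ∂μ :=
        norm_integral_le_of_norm_le (hg.norm.mul_const _) <| ae_of_all _ fun y => by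
          rw [norm_mul]
          gcongr
          exact u.norm_coe_le_norm y
    _ = (∫ y, ‖g y‖ ∂μ) * ‖u‖ := integral_mul_const _ _

variable [OpensMeasurableSpace Y]

theorem integrable_mul_continuousMap {g : Y → 𝕜} (hg : Integrable g μ) (u : C(Y, 𝕜)) :
    Integrable (fun y => g y * u y) μ :=
  hg.mul_bdd u.continuous.aestronglyMeasurable (ae_of_all _ u.norm_coe_le_norm)

variable {k : X → Y → 𝕜}

theorem norm_integral_kernel_mul_sub_le (hint : ∀ x, Integrable (k x) μ) (u : C(Y, 𝕜))
    (x₁ x₂ : X) :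
    ‖∫ y, k x₁ y * u y ∂μ - ∫ y, k x₂ y * u y ∂μ‖ ≤ (∫ y, ‖k x₁ y - k x₂ y‖ ∂μ) * ‖u‖ := by
  rw [← integral_sub (integrable_mul_continuousMap (hint x₁) u)
    (integrable_mul_continuousMap (hint x₂) u)]
  simpa only [Pi.sub_apply, sub_mul] using
    norm_integral_mul_continuousMap_le ((hint x₁).sub (hint x₂)) u

variable [TopologicalSpace X]

theorem continuous_integral_kernel_mul (hint : ∀ x, Integrable (k x) μ)
    (hcont : ∀ x₀, Tendsto (fun x => ∫ y, ‖k x y - k x₀ y‖ ∂μ) (𝓝 x₀) (𝓝 0)) (u : C(Y, 𝕜)) :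
    Continuous fun x => ∫ y, k x y * u y ∂μ := by
  refine continuous_iff_continuousAt.2 fun x₀ => tendsto_iff_norm_sub_tendsto_zero.2 ?_
  refine squeeze_zero (fun _ => norm_nonneg _)
    (fun x => norm_integral_kernel_mul_sub_le hint u x x₀) ?_
  simpa using (hcont x₀).mul_const ‖u‖

variable [CompactSpace X]

noncomputable def integralOperator (hint : ∀ x, Integrable (k x) μ)
    (hcont : ∀ x₀, Tendsto (fun x => ∫ y, ‖k x y - k x₀ y‖ ∂μ) (𝓝 x₀) (𝓝 0))
    (hbdd : BddAbove (Set.range fun x => ∫ y, ‖k x y‖ ∂μ)) : C(Y, 𝕜) →L[𝕜] C(X, 𝕜) :=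
  LinearMap.mkContinuousOfExistsBound
    { toFun u := ⟨fun x => ∫ y, k x y * u y ∂μ, continuous_integral_kernel_mul hint hcont u⟩
      map_add' u v := by
        ext x
        simp only [ContinuousMap.coe_mk, ContinuousMap.add_apply, mul_add]
        exact integral_add (integrable_mul_continuousMap (hint x) u)
          (integrable_mul_continuousMap (hint x) v)
      map_smul' c u := by
        ext x
        simp only [ContinuousMap.coe_mk, ContinuousMap.smul_apply, smul_eq_mul, RingHom.id_apply,
          mul_left_comm _ c]
        exact integral_const_mul c _ }
    (let ⟨M, hM⟩ := hbdd; ⟨max M 0, fun u => by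
      refine (ContinuousMap.norm_le _ (by positivity)).2 fun x => ?_
      calc ‖∫ y, k x y * u y ∂μ‖ ≤ (∫ y, ‖k x y‖ ∂μ) * ‖u‖ :=
            norm_integral_mul_continuousMap_le (hint x) u
        _ ≤ max M 0 * ‖u‖ := by
            gcongr
            exact (hM ⟨x, rfl⟩).trans (le_max_left M 0)⟩)

variable (hint : ∀ x, Integrable (k x) μ)
  (hcont : ∀ x₀, Tendsto (fun x => ∫ y, ‖k x y - k x₀ y‖ ∂μ) (𝓝 x₀) (𝓝 0))
  (hbdd : BddAbove (Set.range fun x => ∫ y, ‖k x y‖ ∂μ))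

theorem integralOperator_apply (u : C(Y, 𝕜)) (x : X) :
    integralOperator hint hcont hbdd u x = ∫ y, k x y * u y ∂μ :=
  rfl

theorem equicontinuous_integralOperator_image_closedBall :
    Equicontinuous fun f : integralOperator hint hcont hbdd '' Metric.closedBall 0 1 =>
      ⇑(f : C(X, 𝕜)) := by
  intro x₀
  refine Metric.equicontinuousAt_of_continuity_modulus (fun x => ∫ y, ‖k x y - k x₀ y‖ ∂μ)
    (hcont x₀) _ (Eventually.of_forall fun x f => ?_)
  obtain ⟨u, hu, hKu⟩ := f.2
  rw [← hKu, dist_comm, dist_eq_norm, integralOperator_apply, integralOperator_apply]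
  calc ‖∫ y, k x y * u y ∂μ - ∫ y, k x₀ y * u y ∂μ‖
      ≤ (∫ y, ‖k x y - k x₀ y‖ ∂μ) * ‖u‖ := norm_integral_kernel_mul_sub_le hint u x x₀
    _ ≤ ∫ y, ‖k x y - k x₀ y‖ ∂μ :=
        mul_le_of_le_one_right (integral_nonneg fun _ => norm_nonneg _)
          (mem_closedBall_zero_iff.1 hu)

theorem isCompact_closure_integralOperator_image_closedBall :
    IsCompact (closure (integralOperator hint hcont hbdd '' Metric.closedBall 0 1)) := by
  obtain ⟨M, hM⟩ := id hbdd
  refine ContinuousMap.isCompact_closure_of_equicontinuous (isCompact_closedBall (0 : 𝕜) M) ?_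
    (equicontinuous_integralOperator_image_closedBall hint hcont hbdd)
  rintro _ ⟨u, hu, rfl⟩ x
  rw [mem_closedBall_zero_iff, integralOperator_apply]
  calc ‖∫ y, k x y * u y ∂μ‖ ≤ (∫ y, ‖k x y‖ ∂μ) * ‖u‖ :=
        norm_integral_mul_continuousMap_le (hint x) u
    _ ≤ ∫ y, ‖k x y‖ ∂μ :=
        mul_le_of_le_one_right (integral_nonneg fun _ => norm_nonneg _)
          (mem_closedBall_zero_iff.1 hu)
    _ ≤ M := hM ⟨x, rfl⟩

end IntegralOperator

theorem stmt_10_general (a b : ℝ) (k : ℝ → ℝ → ℂ)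
    (hint : ∀ x ∈ Set.Icc a b, IntegrableOn (k x) (Set.Icc a b))
    (hbdd : BddAbove (Set.range fun x : Set.Icc a b => ∫ y in Set.Icc a b, ‖k x y‖))
    (hcont : ∀ x₂ ∈ Set.Icc a b,
      Filter.Tendsto (fun x₁ => ∫ y in Set.Icc a b, ‖k x₁ y - k x₂ y‖)
        (nhdsWithin x₂ (Set.Icc a b)) (nhds 0)) :
    ∃ K : C(Set.Icc a b, ℂ) →L[ℂ] C(Set.Icc a b, ℂ),
      (∀ u : C(Set.Icc a b, ℂ), ∀ x : Set.Icc a b,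
        K u x = ∫ y : Set.Icc a b, k x y * u y) ∧
      IsCompact (closure (⇑K '' Metric.closedBall 0 1)) := by
  have integral_Icc (f : ℝ → ℝ) : ∫ y in Set.Icc a b, f y = ∫ y : Set.Icc a b, f y :=
    (integral_subtype measurableSet_Icc f).symm
  have hint' (x : Set.Icc a b) : Integrable fun y : Set.Icc a b => k x y :=
    (integrableOn_iff_comap_subtypeVal measurableSet_Icc).1 (hint x x.2)
  have hbdd' : BddAbove (Set.range fun x : Set.Icc a b => ∫ y : Set.Icc a b, ‖k x y‖) := by
    simpa only [fun x : Set.Icc a b => integral_Icc fun y => ‖k x y‖] using hbdd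
  have hcont' (x₀ : Set.Icc a b) :
      Tendsto (fun x : Set.Icc a b => ∫ y : Set.Icc a b, ‖k x y - k x₀ y‖) (𝓝 x₀) (𝓝 0) :=
    ((hcont x₀ x₀.2).comp (map_nhds_subtype_val x₀).le).congr fun x =>
      integral_Icc fun y => ‖k x y - k x₀ y‖
  exact ⟨integralOperator hint' hcont' hbdd', integralOperator_apply hint' hcont' hbdd',
    isCompact_closure_integralOperator_image_closedBall hint' hcont' hbdd'⟩

/-- Under Hypothesis 1 of the paper (each slice `k(x,·)` integrable, uniformly
bounded slice `L¹` norms, and `x ↦ k(x,·)` continuous into `L¹`), the formula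
`(Ku)(x) = ∫_a^b k(x,y)u(y) dy` defines a bounded linear operator `K` on
`C([a,b], ℂ)` with the sup norm, and `K` is compact: the image of the closed
unit ball has compact closure. -/
theorem stmt_10 (a b : ℝ) (hab : a < b) (k : ℝ → ℝ → ℂ)
    (hint : ∀ x ∈ Set.Icc a b, IntegrableOn (k x) (Set.Icc a b))
    (hbdd : BddAbove (Set.range fun x : Set.Icc a b => ∫ y in Set.Icc a b, ‖k x y‖))
    (hcont : ∀ x₂ ∈ Set.Icc a b,
      Filter.Tendsto (fun x₁ => ∫ y in Set.Icc a b, ‖k x₁ y - k x₂ y‖)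
        (nhdsWithin x₂ (Set.Icc a b)) (nhds 0)) :
    ∃ K : C(Set.Icc a b, ℂ) →L[ℂ] C(Set.Icc a b, ℂ),
      (∀ u : C(Set.Icc a b, ℂ), ∀ x : Set.Icc a b,
        K u x = ∫ y : Set.Icc a b, k x y * u y) ∧
      IsCompact (closure (⇑K '' Metric.closedBall 0 1)) :=
  stmt_10_general a b k hint hbdd hcont
end

section
/- For n ∈ ℕ with n ≥ 1, let A(x₁,…,x_n) be the n × n real matrix with entries A_{p,q} = sgn(x_p − x_q) (so the diagonal entries vanish), where sgn(t) = 1 for t > 0, sgn(t) = −1 for t < 0 and sgn(0) = 0. Then ∫_{[−1,1]^n} det A(x₁,…,x_n) dx₁⋯dx_n = 2^n if n is even, and = 0 if n is odd. -/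
/-!
Skew-symmetry makes the determinant vanish identically in odd dimension. In even dimension,
off the null set where two coordinates coincide, sorting the points (a simultaneous permutation
of rows and columns) turns `sgn(x_p − x_q)` into the fixed matrix `sgn(p − q)`, whose
determinant is `1`: splitting off the two largest indices, the Schur complement equals the
matrix of size two less. So the integrand is `1` almost everywhere on a cube of volume `2^n`.
-/

open MeasureTheory

noncomputable def signMatrix {ι : Type*} (x : ι → ℝ) : Matrix ι ι ℝ :=
  Matrix.of fun p q => Real.sign (x p - x q)

theorem Matrix.det_eq_zero_of_transpose_eq_neg {ι R : Type*} [Fintype ι] [DecidableEq ι]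
    [CommRing R] [NoZeroDivisors R] [CharZero R] {A : Matrix ι ι R} (hA : A.transpose = -A)
    (hι : Odd (Fintype.card ι)) : A.det = 0 := by
  have h : A.det = -A.det := by
    conv_lhs => rw [← Matrix.det_transpose, hA, Matrix.det_neg, hι.neg_one_pow, neg_one_mul]
  exact CharZero.eq_neg_self_iff.mp h

section signMatrix

variable {ι κ : Type*}

theorem signMatrix_transpose (x : ι → ℝ) : (signMatrix x).transpose = -signMatrix x := by
  ext p q
  simp only [signMatrix, Matrix.transpose_apply, Matrix.neg_apply, Matrix.of_apply]
  rw [← Real.sign_neg, neg_sub]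

theorem signMatrix_comp (x : ι → ℝ) (e : κ → ι) :
    signMatrix (x ∘ e) = (signMatrix x).submatrix e e :=
  rfl

theorem signMatrix_eq_of_strictMono [LinearOrder ι] {x y : ι → ℝ} (hx : StrictMono x)
    (hy : StrictMono y) : signMatrix x = signMatrix y := by
  ext p q
  simp only [signMatrix, Matrix.of_apply]
  rcases lt_trichotomy p q with h | rfl | h
  · rw [Real.sign_of_neg (sub_neg.2 (hx h)), Real.sign_of_neg (sub_neg.2 (hy h))]
  · simp
  · rw [Real.sign_of_pos (sub_pos.2 (hx h)), Real.sign_of_pos (sub_pos.2 (hy h))]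

theorem det_signMatrix_of_odd [Fintype ι] [DecidableEq ι] (x : ι → ℝ)
    (hι : Odd (Fintype.card ι)) : (signMatrix x).det = 0 :=
  Matrix.det_eq_zero_of_transpose_eq_neg (signMatrix_transpose x) hι

theorem det_signMatrix_sumElim [Fintype ι] [DecidableEq ι] (x : ι → ℝ) {a b : ℝ} (hab : a < b)
    (hx : ∀ i, x i < a) : (signMatrix (Sum.elim x ![a, b])).det = (signMatrix x).det := by
  let B : Matrix ι (Fin 2) ℝ := Matrix.of fun _ _ => -1
  let C : Matrix (Fin 2) ι ℝ := Matrix.of fun _ _ => 1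
  let D : Matrix (Fin 2) (Fin 2) ℝ := !![0, -1; 1, 0]
  let _ : Invertible D := by
    refine ⟨!![0, 1; -1, 0], ?_, ?_⟩ <;>
      · ext i j
        fin_cases i <;> fin_cases j <;> simp [D]
  have hblocks : signMatrix (Sum.elim x ![a, b]) = Matrix.fromBlocks (signMatrix x) B C D := by
    have hb : ∀ i, x i < b := fun i => (hx i).trans hab
    ext (p | p) (q | q)
    · rfl
    · fin_cases q <;> simp [signMatrix, B, Real.sign_of_neg, hx, hb]
    · fin_cases p <;> simp [signMatrix, C, Real.sign_of_pos, hx, hb]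
    · fin_cases p <;> fin_cases q <;> simp [signMatrix, D, Real.sign_of_pos, Real.sign_of_neg, hab]
  -- `B * ⅟D * C` is minus the entry sum of `⅟D` times the all-ones matrix, and `⅟D` is skew.
  have hschur : B * ⅟D * C = 0 := by
    ext i j
    simp [B, C, Matrix.mul_apply, Fin.sum_univ_two, show ⅟D = !![0, 1; -1, 0] from rfl]
  rw [hblocks, Matrix.det_fromBlocks₂₂, hschur, sub_zero, Matrix.det_fin_two_of]
  simp

theorem det_signMatrix_of_injective {n : ℕ} (x : Fin n → ℝ) (hx : Function.Injective x) :
    (signMatrix x).det = (signMatrix fun i : Fin n => (i : ℝ)).det := by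
  have hsorted : StrictMono (x ∘ Tuple.sort x) :=
    (Tuple.monotone_sort x).strictMono_of_injective (hx.comp (Tuple.sort x).injective)
  rw [← Matrix.det_submatrix_equiv_self (Tuple.sort x), ← signMatrix_comp,
    signMatrix_eq_of_strictMono hsorted fun _ _ h => Nat.cast_lt.2 h]

end signMatrix

theorem det_signMatrix_natCast_add_two (m : ℕ) :
    (signMatrix fun i : Fin (m + 2) => (i : ℝ)).det =
      (signMatrix fun i : Fin m => (i : ℝ)).det := by
  have hsplit : (fun i : Fin (m + 2) => (i : ℝ)) ∘ finSumFinEquiv =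
      Sum.elim (fun i : Fin m => (i : ℝ)) ![(m : ℝ), m + 1] := by
    ext (i | i)
    · simp
    · fin_cases i <;> simp
  rw [← Matrix.det_submatrix_equiv_self finSumFinEquiv, ← signMatrix_comp, hsplit,
    det_signMatrix_sumElim _ (lt_add_one _) fun i => by exact_mod_cast i.isLt]

theorem det_signMatrix_natCast_of_even {n : ℕ} (hn : Even n) :
    (signMatrix fun i : Fin n => (i : ℝ)).det = 1 := by
  obtain ⟨k, rfl⟩ := hn
  induction k with
  | zero => exact Matrix.det_fin_zero
  | succ k ih => rwa [show k + 1 + (k + 1) = k + k + 2 by omega, det_signMatrix_natCast_add_two]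

theorem ae_injective {ι : Type*} [Fintype ι] : ∀ᵐ x : ι → ℝ, Function.Injective x := by
  classical
  have hdiag : ∀ p q : ι, p ≠ q → ∀ᵐ x : ι → ℝ, x p ≠ x q := by
    intro p q hpq
    let ℓ : (ι → ℝ) →ₗ[ℝ] ℝ := (LinearMap.proj p : (ι → ℝ) →ₗ[ℝ] ℝ) - LinearMap.proj q
    have hker : {x : ι → ℝ | x p = x q} = (LinearMap.ker ℓ : Set (ι → ℝ)) := by
      ext x
      simp [ℓ, sub_eq_zero]
    have hproper : LinearMap.ker ℓ ≠ ⊤ := fun htop => by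
      have h : Pi.single p (1 : ℝ) ∈ LinearMap.ker ℓ := htop ▸ Submodule.mem_top
      simp [ℓ, Pi.single_eq_of_ne (Ne.symm hpq)] at h
    rw [ae_iff]
    simpa only [not_not, hker] using Measure.addHaar_submodule volume _ hproper
  have hall : ∀ᵐ x : ι → ℝ, ∀ p q : ι, p ≠ q → x p ≠ x q := by
    simpa only [ae_all_iff, Filter.eventually_imp_distrib_left] using hdiag
  filter_upwards [hall] with x hx p q using not_imp_not.1 (hx p q)

theorem stmt_18_general (n : ℕ) :
    (∫ x in Set.univ.pi (fun _ : Fin n => Set.Icc (-1 : ℝ) 1),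
        Matrix.det (Matrix.of fun p q : Fin n => Real.sign (x p - x q))) =
      if Even n then (2 : ℝ) ^ n else 0 := by
  change (∫ x in _, (signMatrix x).det) = _
  split_ifs with hn
  · have hone : ∀ᵐ x : Fin n → ℝ, (signMatrix x).det = 1 := by
      filter_upwards [ae_injective] with x hx
      rw [det_signMatrix_of_injective x hx, det_signMatrix_natCast_of_even hn]
    rw [setIntegral_congr_ae (MeasurableSet.univ_pi fun _ => measurableSet_Icc)
      (hone.mono fun x hx _ => hx), setIntegral_const, measureReal_def, volume_pi_pi]
    simp [Real.volume_Icc, one_add_one_eq_two]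
  · have hzero (x : Fin n → ℝ) : (signMatrix x).det = 0 :=
      det_signMatrix_of_odd x ((Fintype.card_fin n).symm ▸ Nat.not_even_iff_odd.mp hn)
    simp only [hzero, integral_zero]

/-- The coefficients of the 2-modified Fredholm determinant of the kernel
`sgn(x−y)` on `L²(−1,1)`: for `n ≥ 1`, the integral over the cube `[−1,1]^n`
of `det (sgn(x_p − x_q))_{p,q}` equals `2^n` when `n` is even and `0` when `n`
is odd. -/
theorem stmt_18 (n : ℕ) (hn : 1 ≤ n) :
    (∫ x in Set.univ.pi (fun _ : Fin n => Set.Icc (-1 : ℝ) 1),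
        Matrix.det (Matrix.of fun p q : Fin n => Real.sign (x p - x q))) =
      if Even n then (2 : ℝ) ^ n else 0 :=
  stmt_18_general n
end
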